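/- arXiv:2104.14573 — 2 statements merged into one kernel-verified Lean document; each statement's English description precedes it below -/
import Mathlib

section
/- Let M > 0 and 0 ≤ s < 1/M. For every x ∈ ℝ there exists a unique y ∈ ℝ satisfying h(y) + h(x + y) = h(x)·(1 − M s). Moreover y = 0 whenever x = 0 or s = 0; if x > 0 and s > 0 then −x < y < 0; and if x < 0 and s > 0 then 0 < y < −x. In particular, for x ≠ 0 and s > 0 one has x·y < 0 and x·(x + y) > 0. -/
/-!
Since `h` is continuous, strictly increasing and unbounded in both directions, so is
`y ↦ h(y) + h(x + y)`; hence it hits the value `h(x)(1 - Ms)` exactly once. This map takes the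
value `h(x)` at `y = 0` and `h(-x)` at `y = -x`, and for `s > 0` the target `h(x)(1 - Ms)` lies
strictly between these two, which pins the solution between `0` and `-x`.
-/

/-- The function `h` used to parametrize rarefaction (`ε ≥ 0`) and shock (`ε < 0`)
branches of the wave curves of the isothermal p-system. -/
noncomputable def waveH (ε : ℝ) : ℝ := if 0 ≤ ε then ε else Real.sinh ε

open Filter

lemma waveH_eq_min (ε : ℝ) : waveH ε = min ε (Real.sinh ε) := by
  unfold waveH
  rcases le_or_gt 0 ε with h | h
  · rw [if_pos h, min_eq_left (Real.self_le_sinh_iff.2 h)]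
  · rw [if_neg h.not_ge, min_eq_right (Real.sinh_le_self_iff.2 h.le)]

@[simp]
lemma waveH_zero : waveH 0 = 0 := by simp [waveH]

lemma waveH_strictMono : StrictMono waveH := by
  intro a b hab
  rw [waveH_eq_min, waveH_eq_min]
  exact lt_min ((min_le_left _ _).trans_lt hab)
    ((min_le_right _ _).trans_lt (Real.sinh_strictMono hab))

lemma waveH_continuous : Continuous waveH := by
  simpa only [funext waveH_eq_min] using continuous_id'.min Real.continuous_sinh

lemma waveH_tendsto_atTop : Tendsto waveH atTop atTop := by
  refine tendsto_atTop_mono' _ ?_ tendsto_id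
  filter_upwards [eventually_ge_atTop 0] with ε hε
  simp [waveH, hε]

lemma waveH_tendsto_atBot : Tendsto waveH atBot atBot :=
  tendsto_atBot_mono (fun ε => waveH_eq_min ε ▸ min_le_left _ _) tendsto_id

lemma waveH_pos {ε : ℝ} (h : 0 < ε) : 0 < waveH ε := by
  simpa using waveH_strictMono h

lemma waveH_neg {ε : ℝ} (h : ε < 0) : waveH ε < 0 := by
  simpa using waveH_strictMono h

/-- Here `y` is the reflected and `x + y` the transmitted wave. -/
noncomputable def waveSum (x y : ℝ) : ℝ := waveH y + waveH (x + y)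

namespace waveSum

variable {x y θ : ℝ}

@[simp]
lemma apply_zero (x : ℝ) : waveSum x 0 = waveH x := by simp [waveSum]

@[simp]
lemma apply_neg_self (x : ℝ) : waveSum x (-x) = waveH (-x) := by simp [waveSum]

lemma strictMono (x : ℝ) : StrictMono (waveSum x) :=
  waveH_strictMono.add (waveH_strictMono.comp fun _ _ hab => add_lt_add_right hab x)

lemma surjective (x : ℝ) : Function.Surjective (waveSum x) :=
  (waveH_continuous.add (waveH_continuous.comp (continuous_const.add continuous_id))).surjective
    (waveH_tendsto_atTop.atTop_add_atTop
      (waveH_tendsto_atTop.comp (tendsto_atTop_add_const_left _ x tendsto_id)))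
    (waveH_tendsto_atBot.atBot_add_atBot
      (waveH_tendsto_atBot.comp (tendsto_atBot_add_const_left _ x tendsto_id)))

lemma existsUnique_eq (x c : ℝ) : ∃! y, waveSum x y = c :=
  Function.Bijective.existsUnique ⟨(strictMono x).injective, surjective x⟩ c

lemma eq_waveH_iff : waveSum x y = waveH x ↔ y = 0 := by
  rw [← apply_zero x, (strictMono x).injective.eq_iff]

lemma bounds_of_pos (hx : 0 < x) (hθ₀ : 0 ≤ θ) (hθ₁ : θ < 1)
    (hy : waveSum x y = waveH x * θ) : -x < y ∧ y < 0 := by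
  have hh : 0 < waveH x := waveH_pos hx
  constructor
  · rw [← (strictMono x).lt_iff_lt, hy, apply_neg_self]
    exact (waveH_neg (neg_lt_zero.2 hx)).trans_le (mul_nonneg hh.le hθ₀)
  · rw [← (strictMono x).lt_iff_lt, hy, apply_zero]
    exact mul_lt_of_lt_one_right hh hθ₁

lemma bounds_of_neg (hx : x < 0) (hθ₀ : 0 ≤ θ) (hθ₁ : θ < 1)
    (hy : waveSum x y = waveH x * θ) : 0 < y ∧ y < -x := by
  have hh : waveH x < 0 := waveH_neg hx
  constructor
  · rw [← (strictMono x).lt_iff_lt, hy, apply_zero]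
    nlinarith
  · rw [← (strictMono x).lt_iff_lt, hy, apply_neg_self]
    exact (mul_nonpos_of_nonpos_of_nonneg hh.le hθ₀).trans_lt (waveH_pos (neg_pos.2 hx))

end waveSum

theorem time_step_reflected_wave_exists_unique_general (M s : ℝ) (hM : 0 < M)
    (hs' : s < 1 / M) (x : ℝ) :
    (∃! y : ℝ, waveH y + waveH (x + y) = waveH x * (1 - M * s)) ∧
    (∀ y : ℝ, waveH y + waveH (x + y) = waveH x * (1 - M * s) →
      ((x = 0 ∨ s = 0) → y = 0) ∧
      (0 < x → 0 < s → -x < y ∧ y < 0) ∧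
      (x < 0 → 0 < s → 0 < y ∧ y < -x) ∧
      (x ≠ 0 → 0 < s → x * y < 0 ∧ 0 < x * (x + y))) := by
  have hθ₀ : 0 ≤ 1 - M * s := by
    have := (lt_div_iff₀' hM).1 hs'
    linarith
  refine ⟨waveSum.existsUnique_eq x _, fun y hy => ?_⟩
  change waveSum x y = _ at hy
  have hθ₁ : 0 < s → 1 - M * s < 1 := fun hs => by nlinarith
  have hpos := fun hx hs => waveSum.bounds_of_pos hx hθ₀ (hθ₁ hs) hy
  have hneg := fun hx hs => waveSum.bounds_of_neg hx hθ₀ (hθ₁ hs) hy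
  refine ⟨fun h0 => (waveSum.eq_waveH_iff (x := x)).1 ?_, hpos, hneg, fun hx hs => ?_⟩
  · rcases h0 with rfl | rfl <;> simp [hy]
  · rcases hx.lt_or_gt with hx | hx
    · obtain ⟨h₁, h₂⟩ := hneg hx hs
      constructor <;> nlinarith
    · obtain ⟨h₁, h₂⟩ := hpos hx hs
      constructor <;> nlinarith

/-- for `M > 0`, `0 ≤ s < 1/M` and every `x`, the time-step equation
`h(y) + h(x+y) = h(x)(1 - Ms)` has a unique solution `y`, which moreover
satisfies the stated sign rules. -/
theorem time_step_reflected_wave_exists_unique (M s : ℝ) (hM : 0 < M)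
    (hs : 0 ≤ s) (hs' : s < 1 / M) (x : ℝ) :
    (∃! y : ℝ, waveH y + waveH (x + y) = waveH x * (1 - M * s)) ∧
    (∀ y : ℝ, waveH y + waveH (x + y) = waveH x * (1 - M * s) →
      ((x = 0 ∨ s = 0) → y = 0) ∧
      (0 < x → 0 < s → -x < y ∧ y < 0) ∧
      (x < 0 → 0 < s → 0 < y ∧ y < -x) ∧
      (x ≠ 0 → 0 < s → x * y < 0 ∧ 0 < x * (x + y))) :=
  time_step_reflected_wave_exists_unique_general M s hM hs' x
end

section
/- Let q > 0, set c(q) = (cosh q − 1)/(cosh q + 1), and let 1 ≤ ξ ≤ 1/c(q). Define W_ξ : ℝ → ℝ by W_ξ(x) = max(x,0) + ξ·max(−x,0). Let α < 0 < β with |α| ≤ q and β ≤ q. If ε₁, ε₂ ∈ ℝ satisfy ε₂ − ε₁ = α + β and h(ε₁) + h(ε₂) = h(α) + h(β), then the stronger decay estimate W_ξ(ε₁) + W_ξ(ε₂) + ξ·(ξ − 1)·|ε₁| ≤ W_ξ(α) + W_ξ(β) holds. -/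
/-- Weighted strength: weight `1` for rarefactions (positive part) and
weight `ξ` for shocks (negative part). -/
noncomputable def weightedStrength (ξ x : ℝ) : ℝ := max x 0 + ξ * max (-x) 0

/-!
Write `x = |ε₁|`, `a = |α|`. The identity `h(ε₁) + h(ε₂) = h(α) + h(β)` forces `ε₁ < 0` and turns
into `sinh x + x = g a - g b` for `g t = sinh t - t`, where `b = 0` if `ε₂ ≥ 0` and `b = |ε₂| ≤ a`
if `ε₂ < 0`. Since `g' = cosh - 1 ≤ cosh q - 1` on `[0, q]` and `sinh x + x ≥ 2x`, this gives
`2x ≤ (cosh q - 1)(a - b)`, and `ξ ≤ 1/c(q)` says exactly `(ξ - 1)(cosh q - 1) ≤ 2`. Hence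
`(ξ - 1) x ≤ a - b`, which in either case is the decay estimate after cancelling a factor `ξ + 1`.
-/

open Real

lemma weightedStrength_of_nonneg {ξ x : ℝ} (hx : 0 ≤ x) : weightedStrength ξ x = x := by
  simp [weightedStrength, hx]

lemma weightedStrength_of_nonpos {ξ x : ℝ} (hx : x ≤ 0) : weightedStrength ξ x = ξ * -x := by
  simp [weightedStrength, hx]

lemma waveH_of_nonneg {ε : ℝ} (hε : 0 ≤ ε) : waveH ε = ε := if_pos hε

lemma waveH_of_neg {ε : ℝ} (hε : ε < 0) : waveH ε = sinh ε := if_neg hε.not_ge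

lemma waveH_monotone : Monotone waveH := by
  intro x y hxy
  rcases lt_or_ge y 0 with hy | hy
  · rw [waveH_of_neg hy, waveH_of_neg (hxy.trans_lt hy)]
    exact sinh_le_sinh.2 hxy
  · rw [waveH_of_nonneg hy]
    rcases lt_or_ge x 0 with hx | hx
    · rw [waveH_of_neg hx]
      linarith [sinh_neg_iff.2 hx]
    · rwa [waveH_of_nonneg hx]

lemma waveH_add_waveH_lt_waveH_add {α β : ℝ} (hα : α < 0) (hβ : 0 < β) :
    waveH α + waveH β < waveH (α + β) := by
  rw [waveH_of_neg hα, waveH_of_nonneg hβ.le]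
  rcases lt_or_ge (α + β) 0 with hαβ | hαβ
  · rw [waveH_of_neg hαβ]
    linarith [sinh_sub_id_strictMono (lt_add_of_pos_right α hβ)]
  · rw [waveH_of_nonneg hαβ]
    linarith [sinh_lt_self_iff.2 hα]

lemma neg_of_waveH_add_eq {α β ε₁ ε₂ : ℝ} (hα : α < 0) (hβ : 0 < β) (h1 : ε₂ - ε₁ = α + β)
    (h2 : waveH ε₁ + waveH ε₂ = waveH α + waveH β) : ε₁ < 0 := by
  by_contra! hε₁
  have hε₂ : waveH (α + β) ≤ waveH ε₂ := waveH_monotone (by linarith)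
  linarith [waveH_of_nonneg hε₁, waveH_add_waveH_lt_waveH_add hα hβ]

lemma sinh_sub_sinh_le_cosh_mul {q a b : ℝ} (hb : -q ≤ b) (hba : b ≤ a) (ha : a ≤ q) :
    sinh a - sinh b ≤ cosh q * (a - b) := by
  refine (convex_Icc (-q) q).image_sub_le_mul_sub_of_deriv_le
    differentiable_sinh.continuous.continuousOn differentiable_sinh.differentiableOn
    (fun t ht ↦ ?_) b ⟨hb, hba.trans ha⟩ a ⟨hb.trans hba, ha⟩ hba
  rw [interior_Icc] at ht
  rw [Real.deriv_sinh, cosh_le_cosh, abs_le]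
  exact ⟨by linarith [ht.1, le_abs_self q], by linarith [ht.2, le_abs_self q]⟩

lemma sub_one_mul_cosh_sub_one_le_two {ξ C : ℝ} (hC : 1 ≤ C)
    (hξ : ξ ≤ 1 / ((C - 1) / (C + 1))) : (ξ - 1) * (C - 1) ≤ 2 := by
  rcases hC.eq_or_lt with rfl | hC
  · norm_num
  rw [one_div_div, le_div_iff₀ (by linarith)] at hξ
  linarith

lemma sub_one_mul_le_of_sinh_add_self_eq {q ξ a b x : ℝ} (hξ1 : 1 ≤ ξ)
    (hξ2 : (ξ - 1) * (cosh q - 1) ≤ 2) (hx : 0 ≤ x) (hb : -q ≤ b) (hba : b ≤ a) (ha : a ≤ q)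
    (h : sinh x + x = (sinh a - a) - (sinh b - b)) : (ξ - 1) * x ≤ a - b := by
  have hdiff := sinh_sub_sinh_le_cosh_mul hb hba ha
  have hx2 : 2 * x ≤ (cosh q - 1) * (a - b) := by linarith [self_le_sinh_iff.2 hx]
  nlinarith [mul_le_mul_of_nonneg_left hx2 (sub_nonneg.2 hξ1),
    mul_le_mul_of_nonneg_right hξ2 (sub_nonneg.2 hba)]

theorem weighted_functional_decay_strong_general (q ξ α β ε₁ ε₂ : ℝ)
    (hξ1 : 1 ≤ ξ) (hξ2 : ξ ≤ 1 / ((Real.cosh q - 1) / (Real.cosh q + 1)))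
    (hα : α < 0) (hβ : 0 < β) (hαq : |α| ≤ q)
    (h1 : ε₂ - ε₁ = α + β)
    (h2 : waveH ε₁ + waveH ε₂ = waveH α + waveH β) :
    weightedStrength ξ ε₁ + weightedStrength ξ ε₂ + ξ * (ξ - 1) * |ε₁| ≤
      weightedStrength ξ α + weightedStrength ξ β := by
  have hε₁ := neg_of_waveH_add_eq hα hβ h1 h2
  have hξC := sub_one_mul_cosh_sub_one_le_two (one_le_cosh q) hξ2
  have haq : -α ≤ q := by rwa [abs_of_neg hα] at hαq
  rw [waveH_of_neg hε₁, waveH_of_neg hα, waveH_of_nonneg hβ.le] at h2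
  rw [weightedStrength_of_nonpos hε₁.le, weightedStrength_of_nonpos hα.le,
    weightedStrength_of_nonneg hβ.le, abs_of_neg hε₁]
  rcases le_or_gt 0 ε₂ with hε₂ | hε₂
  · rw [waveH_of_nonneg hε₂] at h2
    rw [weightedStrength_of_nonneg hε₂]
    have hrefl : (ξ - 1) * -ε₁ ≤ -α - 0 :=
      sub_one_mul_le_of_sinh_add_self_eq hξ1 hξC (by linarith) (by linarith) (by linarith) haq
        (by simp only [sinh_neg, sinh_zero]; linarith)
    linarith [mul_le_mul_of_nonneg_left hrefl (by linarith : (0 : ℝ) ≤ ξ + 1)]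
  · rw [waveH_of_neg hε₂] at h2
    rw [weightedStrength_of_nonpos hε₂.le]
    have hαε₂ : α ≤ ε₂ := sinh_le_sinh.1 (by linarith [sinh_neg_iff.2 hε₁])
    have hrefl : (ξ - 1) * -ε₁ ≤ -α - -ε₂ :=
      sub_one_mul_le_of_sinh_add_self_eq hξ1 hξC (by linarith) (by linarith) (by linarith) haq
        (by simp only [sinh_neg]; linarith)
    linarith [mul_le_mul_of_nonneg_left hrefl (by linarith : (0 : ℝ) ≤ ξ + 1)]

/-- stronger decay estimate for a shock–rarefaction interaction
(`α < 0 < β`): `W_ξ(ε₁) + W_ξ(ε₂) + ξ(ξ−1)|ε₁| ≤ W_ξ(α) + W_ξ(β)` for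
`1 ≤ ξ ≤ 1/c(q)`, `c(q) = (cosh q − 1)/(cosh q + 1)`. -/
theorem weighted_functional_decay_strong (q ξ α β ε₁ ε₂ : ℝ) (hq : 0 < q)
    (hξ1 : 1 ≤ ξ) (hξ2 : ξ ≤ 1 / ((Real.cosh q - 1) / (Real.cosh q + 1)))
    (hα : α < 0) (hβ : 0 < β) (hαq : |α| ≤ q) (hβq : β ≤ q)
    (h1 : ε₂ - ε₁ = α + β)
    (h2 : waveH ε₁ + waveH ε₂ = waveH α + waveH β) :
    weightedStrength ξ ε₁ + weightedStrength ξ ε₂ + ξ * (ξ - 1) * |ε₁| ≤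
      weightedStrength ξ α + weightedStrength ξ β :=
  weighted_functional_decay_strong_general q ξ α β ε₁ ε₂ hξ1 hξ2 hα hβ hαq h1 h2
end
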